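/- arXiv:2504.04525 — 6 statements merged into one kernel-verified Lean document; each statement's English description precedes it below -/
import Mathlib

section
/- For a compact set X in the plane, the map (V, t) ↦ H^s_∞(X ∩ proj_V^{-1}(t)), sending a line V through the origin and a real number t to the s-dimensional Hausdorff content of the intersection of X with the fiber of the orthogonal projection onto V over t, is upper semi-continuous. -/
open MeasureTheory Set
open scoped ENNReal RealInnerProductSpace

noncomputable section

abbrev E2 := EuclideanSpace ℝ (Fin 2)

/-- The `s`-dimensional Hausdorff content of a set `A ⊆ ℝ²`:
`H^s_∞(A) = inf { ∑ᵢ |Uᵢ|^s : A ⊆ ⋃ᵢ Uᵢ }`. -/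
noncomputable def hausdorffContent (s : ℝ) (A : Set E2) : ℝ≥0∞ :=
  ⨅ (U : ℕ → Set E2) (_ : A ⊆ ⋃ n, U n), ∑' n, EMetric.diam (U n) ^ s

/-- For a compact `X ⊆ ℝ²`, the map `(V, t) ↦ H^s_∞(X ∩ proj_V⁻¹(t))` is upper
semi-continuous, where a one-dimensional subspace `V` is represented by a unit
vector `v` and `proj_V⁻¹(t) = {x : ⟪v, x⟫ = t}`. -/
theorem stmt0 (X : Set E2) (hX : IsCompact X) (s : ℝ) (hs : 0 ≤ s) :
    UpperSemicontinuousOn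
      (fun p : E2 × ℝ => hausdorffContent s (X ∩ {x | ⟪p.1, x⟫ = p.2}))
      {p : E2 × ℝ | ‖p.1‖ = 1} := by
  intro p hp c hc
  have hc' : hausdorffContent s (X ∩ {x | ⟪p.1, x⟫ = p.2}) < c := hc
  clear hc
  rcases hs.eq_or_lt with hs0 | hs0
  · exfalso
    have h : hausdorffContent s (X ∩ {x | ⟪p.1, x⟫ = p.2}) = ⊤ := by
      unfold hausdorffContent
      simp [← hs0, ENNReal.rpow_zero, ENNReal.tsum_const_eq_top_of_ne_zero]
    rw [h] at hc'
    exact (not_top_lt hc').elim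
  · obtain ⟨U, hU, hsum⟩ : ∃ U : ℕ → Set E2, ∃ _ : (X ∩ {x | ⟪p.1, x⟫ = p.2}) ⊆ ⋃ n, U n,
        ∑' n, EMetric.diam (U n) ^ s < c := by
      simpa [hausdorffContent, iInf_lt_iff] using hc'
    obtain ⟨δ, hδ0, hδ⟩ := ENNReal.lt_iff_exists_add_pos_lt.1 hsum
    have hdiam : ∀ n, EMetric.diam (U n) ≠ ⊤ := by
      intro n h
      have h1 : EMetric.diam (U n) ^ s ≤ ∑' n, EMetric.diam (U n) ^ s := ENNReal.le_tsum n
      rw [h, ENNReal.top_rpow_of_pos hs0, top_le_iff] at h1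
      exact (ne_top_of_lt hsum) h1
    set δ' : ℕ → ℝ≥0∞ := fun n => (δ : ℝ≥0∞) / 2 ^ (n + 1) with hδ'
    have hδ'pos : ∀ n, 0 < δ' n := fun n =>
      ENNReal.div_pos (by exact_mod_cast hδ0.ne') (by simp)
    have hεex : ∀ n, ∃ ε : NNReal, 0 < ε ∧
        (EMetric.diam (U n) + ((2 * ε : NNReal) : ℝ≥0∞)) ^ s
          < EMetric.diam (U n) ^ s + δ' n := by
      intro n
      have hcont : Continuous fun ε : NNReal =>
          (EMetric.diam (U n) + ((2 * ε : NNReal) : ℝ≥0∞)) ^ s :=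
        ENNReal.continuous_rpow_const.comp
          (continuous_const.add
            (ENNReal.continuous_coe.comp (continuous_const.mul continuous_id)))
      have hlt : (EMetric.diam (U n) + ((2 * (0 : NNReal) : NNReal) : ℝ≥0∞)) ^ s
          < EMetric.diam (U n) ^ s + δ' n := by
        simp only [mul_zero, ENNReal.coe_zero, add_zero]
        exact ENNReal.lt_add_right
          (ENNReal.rpow_ne_top_of_nonneg hs (hdiam n)) (hδ'pos n).ne'
      have htd := ((hcont.tendsto 0).mono_left
        (nhdsWithin_le_nhds (s := Set.Ioi (0 : NNReal))))
      obtain ⟨ε, hε1, hε2⟩ := ((htd.eventually_lt_const hlt).and self_mem_nhdsWithin).exists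
      exact ⟨ε, hε2, hε1⟩
    choose ε hεpos hεlt using hεex
    set V : ℕ → Set E2 := fun n => Metric.thickening (ε n : ℝ) (U n) with hV
    have hVopen : ∀ n, IsOpen (V n) := fun n => Metric.isOpen_thickening
    have hUV : ∀ n, U n ⊆ V n := fun n =>
      Metric.self_subset_thickening (by exact_mod_cast hεpos n) _
    have hVd : ∀ n, EMetric.diam (V n) ≤ EMetric.diam (U n) + ((2 * ε n : NNReal) : ℝ≥0∞) := by
      intro n
      have := Metric.ediam_thickening_le (s := U n) (ε n)
      rwa [ENNReal.coe_mul, ENNReal.coe_two] at *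
    have hVsum : ∑' n, EMetric.diam (V n) ^ s < c := by
      have h1 : ∑' n, EMetric.diam (V n) ^ s ≤ ∑' n, (EMetric.diam (U n) ^ s + δ' n) :=
        ENNReal.tsum_le_tsum fun n =>
          ((ENNReal.rpow_le_rpow (hVd n) hs).trans_lt (hεlt n)).le
      have h2 : (∑' n : ℕ, ((δ : ℝ≥0∞) / 2 ^ (n + 1))) = (δ : ℝ≥0∞) := by
        have h3 : ∀ n : ℕ, (δ : ℝ≥0∞) / 2 ^ (n + 1) = ((δ : ℝ≥0∞) / 2) * 2⁻¹ ^ n := by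
          intro n
          rw [pow_succ, div_eq_mul_inv, ENNReal.mul_inv (by simp) (by simp),
            div_eq_mul_inv, ENNReal.inv_pow]
          ring
        rw [tsum_congr h3, ENNReal.tsum_mul_left, ENNReal.tsum_geometric,
          ENNReal.one_sub_inv_two, inv_inv, div_eq_mul_inv, mul_assoc,
          ENNReal.inv_mul_cancel two_ne_zero ENNReal.ofNat_ne_top, mul_one]
      calc ∑' n, EMetric.diam (V n) ^ s ≤ ∑' n, (EMetric.diam (U n) ^ s + δ' n) := h1
        _ = (∑' n, EMetric.diam (U n) ^ s) + ∑' n, δ' n := ENNReal.tsum_add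
        _ = (∑' n, EMetric.diam (U n) ^ s) + δ := by rw [hδ']; exact congrArg _ h2
        _ < c := hδ
    set K : Set E2 := X \ ⋃ n, V n with hK
    have hKc : IsCompact K := hX.diff (isOpen_iUnion hVopen)
    have hopen : IsOpen {z : (E2 × ℝ) × E2 | ⟪z.1.1, z.2⟫ ≠ z.1.2} :=
      isOpen_ne_fun ((continuous_fst.fst).inner continuous_snd) (continuous_fst.snd)
    have hev : ∀ᶠ q in nhds p, ∀ x ∈ K, ⟪q.1, x⟫ ≠ q.2 := by
      apply hKc.eventually_forall_of_forall_eventually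
        (P := fun (q : E2 × ℝ) (x : E2) => ⟪q.1, x⟫ ≠ q.2)
      intro x hx
      apply hopen.mem_nhds
      intro hmem
      exact hx.2 (Set.mem_iUnion.2 <| by
        obtain ⟨n, hn⟩ := Set.mem_iUnion.1 (hU ⟨hx.1, hmem⟩)
        exact ⟨n, hUV n hn⟩)
    filter_upwards [hev.filter_mono nhdsWithin_le_nhds] with q hq
    have hsub : X ∩ {x | ⟪q.1, x⟫ = q.2} ⊆ ⋃ n, V n := by
      rintro x ⟨hxX, hxf⟩
      by_contra hxV
      exact hq x ⟨hxX, hxV⟩ hxf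
    calc hausdorffContent s (X ∩ {x | ⟪q.1, x⟫ = q.2})
        ≤ ∑' n, EMetric.diam (V n) ^ s := iInf₂_le V hsub
      _ < c := hVsum

end
end

section
/- Let f(x) = Ax + b be an invertible affine map on ℝ², V a one-dimensional subspace, and W = A*V (which is one-dimensional). Then for any Borel set B ⊆ ℝ² and s ≥ 0, ∫ H^s(f(B) ∩ proj_V^{-1}(t)) dλ(t) = ‖A*|_V‖ · ‖A|_{W^⊥}‖^s · ∫ H^s(B ∩ proj_W^{-1}(t)) dλ(t), where λ is Lebesgue measure on ℝ, H^s is s-dimensional Hausdorff measure, and W^⊥ is the orthogonal complement of W. -/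
open MeasureTheory Set ContinuousLinearMap
open scoped ENNReal RealInnerProductSpace

noncomputable section

/-! `A* v = ‖A* v‖ w`, so `f` maps the slice of `B` at height `r` in direction `w` onto the slice
of `f(B)` at height `‖A* v‖ r + ⟪v, b⟫`. Each slice lies on a line parallel to `W^⊥ = ℝ u`, on
which `f` is a similarity of ratio `‖A u‖`, so it scales `H^s` by `‖A u‖^s`; the substitution
`t ↦ (t - ⟪v, b⟫) / ‖A* v‖` in the outer integral contributes the factor `‖A* v‖`. -/

section Similarity

variable {X Y : Type*} [EMetricSpace X] [EMetricSpace Y] [MeasurableSpace X] [BorelSpace X]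
  [MeasurableSpace Y] [BorelSpace Y]

theorem hausdorffMeasure_image_of_edist_eq {f : X → Y} {S : Set X} {K : NNReal} (hK : K ≠ 0)
    (hf : ∀ x ∈ S, ∀ y ∈ S, edist (f x) (f y) = K * edist x y) {d : ℝ} (hd : 0 ≤ d) :
    μH[d] (f '' S) = (K : ℝ≥0∞) ^ d * μH[d] S := by
  rcases S.eq_empty_or_nonempty with rfl | ⟨x₀, -⟩
  · simp
  have : Nonempty X := ⟨x₀⟩
  have hK' : (K : ℝ≥0∞) ≠ 0 := ENNReal.coe_ne_zero.mpr hK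
  have hinj : InjOn f S := fun x hx y hy hxy => by
    simpa [hK'] using (hf x hx y hy).symm.trans (edist_eq_zero.mpr hxy)
  set g := Function.invFunOn f S
  have hgf : LeftInvOn g f S := hinj.leftInvOn_invFunOn
  have hg : LipschitzOnWith K⁻¹ g (f '' S) := by
    rintro _ ⟨x, hx, rfl⟩ _ ⟨y, hy, rfl⟩
    rw [hgf hx, hgf hy, hf x hx y hy, ENNReal.coe_inv hK, ← mul_assoc,
      ENNReal.inv_mul_cancel hK' ENNReal.coe_ne_top, one_mul]
  have hKd : (K : ℝ≥0∞) ^ d ≠ 0 := by simp [hK]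
  have hKd' : (K : ℝ≥0∞) ^ d ≠ ⊤ := by simp [hd]
  have hf' : LipschitzOnWith K f S := fun x hx y hy => (hf x hx y hy).le
  refine le_antisymm (hf'.hausdorffMeasure_image_le hd) ?_
  calc (K : ℝ≥0∞) ^ d * μH[d] S = (K : ℝ≥0∞) ^ d * μH[d] (g '' (f '' S)) := by
        rw [hgf.image_image]
    _ ≤ (K : ℝ≥0∞) ^ d * (((K⁻¹ : NNReal) : ℝ≥0∞) ^ d * μH[d] (f '' S)) := by
        gcongr; exact hg.hausdorffMeasure_image_le hd
    _ = μH[d] (f '' S) := by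
        rw [ENNReal.coe_inv hK, ENNReal.inv_rpow, ← mul_assoc, ENNReal.mul_inv_cancel hKd hKd',
          one_mul]

end Similarity

theorem lintegral_comp_sub_div (F : ℝ → ℝ≥0∞) (c : ℝ) {a : ℝ} (ha : 0 < a) :
    ∫⁻ t, F ((t - c) / a) = ENNReal.ofReal a * ∫⁻ t, F t := by
  have hmul := (measurableEmbedding_mulLeft₀ (inv_ne_zero ha.ne')).lintegral_map (μ := volume) F
  rw [Real.map_volume_mul_left (inv_ne_zero ha.ne'), lintegral_smul_measure, inv_inv,
    abs_of_pos ha] at hmul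
  simp_rw [div_eq_inv_mul]
  rw [lintegral_sub_right_eq_self (fun t => F (a⁻¹ * t)) c, ← hmul, smul_eq_mul]

section InnerProductSpace

variable {E : Type*} [NormedAddCommGroup E] [InnerProductSpace ℝ E]

theorem orthogonal_span_singleton_eq_of_finrank_eq_two (hE : Module.finrank ℝ E = 2) {u w : E}
    (hu : u ≠ 0) (hw : w ≠ 0) (huw : ⟪w, u⟫ = 0) : (ℝ ∙ w)ᗮ = ℝ ∙ u := by
  have : Fact (Module.finrank ℝ E = 1 + 1) := ⟨hE⟩
  have : FiniteDimensional ℝ E := Module.finite_of_finrank_eq_succ hE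
  refine (Submodule.eq_of_le_of_finrank_eq ?_ ?_).symm
  · rw [Submodule.span_singleton_le_iff_mem]
    exact Submodule.mem_orthogonal_singleton_iff_inner_right.mpr huw
  · rw [finrank_span_singleton hu, Submodule.finrank_orthogonal_span_singleton (n := 1) hw]

theorem edist_affine_eq_of_inner_eq {F : Type*} [NormedAddCommGroup F] [NormedSpace ℝ F]
    (hE : Module.finrank ℝ E = 2) (T : E →L[ℝ] F) (b : F)
    {u w : E} (hu : ‖u‖ = 1) (hw : w ≠ 0) (huw : ⟪w, u⟫ = 0) {x y : E} (hxy : ⟪w, x⟫ = ⟪w, y⟫) :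
    edist (T x + b) (T y + b) = ‖T u‖₊ * edist x y := by
  have hu0 : u ≠ 0 := norm_ne_zero_iff.mp (by simp [hu])
  have hmem : x - y ∈ (ℝ ∙ w)ᗮ :=
    Submodule.mem_orthogonal_singleton_iff_inner_right.mpr (by rw [inner_sub_right, hxy, sub_self])
  rw [orthogonal_span_singleton_eq_of_finrank_eq_two hE hu0 hw huw] at hmem
  obtain ⟨m, hm⟩ := Submodule.mem_span_singleton.mp hmem
  rw [edist_eq_enorm_sub, edist_eq_enorm_sub, enorm_eq_nnnorm, enorm_eq_nnnorm,
    ← ENNReal.coe_mul, ENNReal.coe_inj, ← NNReal.coe_inj, add_sub_add_right_eq_sub, ← map_sub, ← hm]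
  simp only [coe_nnnorm, NNReal.coe_mul, map_smul, norm_smul, hu, mul_one, mul_comm]

variable [CompleteSpace E]

theorem preimage_affine_setOf_inner_eq (T : E →L[ℝ] E) (b v : E) (t : ℝ) :
    (fun x => T x + b) ⁻¹' {x | ⟪v, x⟫ = t} = {x | ⟪adjoint T v, x⟫ = t - ⟪v, b⟫} := by
  ext x
  simp only [mem_preimage, mem_ofPred_eq, inner_add_right, adjoint_inner_left, eq_sub_iff_add_eq]

theorem adjoint_apply_ne_zero (A : E ≃L[ℝ] E) {v : E} (hv : v ≠ 0) :
    adjoint (A : E →L[ℝ] E) v ≠ 0 := by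
  intro h
  have := adjoint_inner_left (A : E →L[ℝ] E) (A.symm v) v
  simp_all [eq_comm (a := (0 : ℝ))]

end InnerProductSpace

theorem stmt3_general (A : E2 ≃L[ℝ] E2) (b : E2) (v u w : E2)
    (hv : ‖v‖ = 1) (hu : ‖u‖ = 1)
    (hw : w = (‖adjoint (A : E2 →L[ℝ] E2) v‖)⁻¹ • adjoint (A : E2 →L[ℝ] E2) v)
    (huw : ⟪w, u⟫ = 0)
    (B : Set E2) (s : ℝ) (hs : 0 ≤ s) :
    ∫⁻ t : ℝ, μH[s] (((fun x => (A : E2 →L[ℝ] E2) x + b) '' B) ∩ {x | ⟪v, x⟫ = t}) ∂volume =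
      ENNReal.ofReal ‖adjoint (A : E2 →L[ℝ] E2) v‖ *
        ENNReal.ofReal ‖(A : E2 →L[ℝ] E2) u‖ ^ s *
        ∫⁻ t : ℝ, μH[s] (B ∩ {x | ⟪w, x⟫ = t}) ∂volume := by
  set T : E2 →L[ℝ] E2 := (A : E2 →L[ℝ] E2)
  set a := ‖adjoint T v‖
  have ha : 0 < a := norm_pos_iff.mpr (adjoint_apply_ne_zero A (norm_ne_zero_iff.mp (by simp [hv])))
  have hTv : adjoint T v = a • w := by rw [hw, smul_smul, mul_inv_cancel₀ ha.ne', one_smul]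
  have hu0 : u ≠ 0 := norm_ne_zero_iff.mp (by simp [hu])
  have hw1 : ‖w‖ = 1 := by rw [hw, norm_smul, norm_inv, norm_norm, inv_mul_cancel₀ ha.ne']
  have hw0 : w ≠ 0 := norm_ne_zero_iff.mp (by simp [hw1])
  have hTu : ‖T u‖₊ ≠ 0 := by simpa [T] using hu0
  have hslice : ∀ t, ((fun x => T x + b) '' B) ∩ {x | ⟪v, x⟫ = t} =
      (fun x => T x + b) '' (B ∩ {x | ⟪w, x⟫ = (t - ⟪v, b⟫) / a}) := by
    intro t
    rw [← image_inter_preimage, preimage_affine_setOf_inner_eq, hTv]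
    simp only [real_inner_smul_left, eq_div_iff ha.ne', mul_comm a]
  have hsim : ∀ r, ∀ x ∈ B ∩ {x | ⟪w, x⟫ = r}, ∀ y ∈ B ∩ {x | ⟪w, x⟫ = r},
      edist (T x + b) (T y + b) = ‖T u‖₊ * edist x y := fun r x hx y hy =>
    edist_affine_eq_of_inner_eq finrank_euclideanSpace_fin T b hu hw0 huw (hx.2.trans hy.2.symm)
  calc _ = ∫⁻ t, (‖T u‖₊ : ℝ≥0∞) ^ s * μH[s] (B ∩ {x | ⟪w, x⟫ = (t - ⟪v, b⟫) / a}) :=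
        lintegral_congr fun t => by
          rw [hslice, hausdorffMeasure_image_of_edist_eq hTu (hsim _) hs]
    _ = (‖T u‖₊ : ℝ≥0∞) ^ s * (ENNReal.ofReal a * ∫⁻ t, μH[s] (B ∩ {x | ⟪w, x⟫ = t})) := by
        rw [lintegral_const_mul' _ _ (by simp [hs]),
          lintegral_comp_sub_div (fun r => μH[s] (B ∩ {x | ⟪w, x⟫ = r})) _ ha]
    _ = _ := by simp only [ofReal_norm, enorm_eq_nnnorm]; ring

/-- Change of variables for sliced Hausdorff measures under an invertible affine
map `f(x) = Ax + b`.  `V` is a one-dimensional subspace spanned by the unit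
vector `v`, `W = A*V` is spanned by the unit vector `w = ‖A* v‖⁻¹ • A* v`, and
`W^⊥` is spanned by the unit vector `u` (so `‖A|_{W^⊥}‖ = ‖A u‖`). Then
`∫ H^s(f(B) ∩ proj_V⁻¹ t) dλ(t) = ‖A*|_V‖ · ‖A|_{W^⊥}‖^s · ∫ H^s(B ∩ proj_W⁻¹ t) dλ(t)`. -/
theorem stmt3 (A : E2 ≃L[ℝ] E2) (b : E2) (v u w : E2)
    (hv : ‖v‖ = 1) (hu : ‖u‖ = 1)
    (hw : w = (‖adjoint (A : E2 →L[ℝ] E2) v‖)⁻¹ • adjoint (A : E2 →L[ℝ] E2) v)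
    (huw : ⟪w, u⟫ = 0)
    (B : Set E2) (hB : MeasurableSet B) (s : ℝ) (hs : 0 ≤ s) :
    ∫⁻ t : ℝ, μH[s] (((fun x => (A : E2 →L[ℝ] E2) x + b) '' B) ∩ {x | ⟪v, x⟫ = t}) ∂volume =
      ENNReal.ofReal ‖adjoint (A : E2 →L[ℝ] E2) v‖ *
        ENNReal.ofReal ‖(A : E2 →L[ℝ] E2) u‖ ^ s *
        ∫⁻ t : ℝ, μH[s] (B ∩ {x | ⟪w, x⟫ = t}) ∂volume :=
  stmt3_general A b v u w hv hu hw huw B s hs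

end
end

section
/- Let X ⊆ ℝ² be compact, V a one-dimensional subspace, and s > 0. Suppose ∫ H^s_∞(X ∩ proj_V^{-1}(t)) dλ(t) = ∫ H^s(X ∩ proj_V^{-1}(t)) dλ(t) < ∞. Then for every Borel subset B ⊆ X, ∫ H^s_∞(B ∩ proj_V^{-1}(t)) dλ(t) = ∫ H^s(B ∩ proj_V^{-1}(t)) dλ(t); in particular H^s_∞(B ∩ proj_V^{-1}(t)) = H^s(B ∩ proj_V^{-1}(t)) for λ-almost every t. -/
open MeasureTheory Set
open scoped ENNReal RealInnerProductSpace

noncomputable section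

/-!
Slice by slice `H^s_∞ ≤ H^s`, so equality of the finite integrals forces `H^s_∞ = H^s < ∞` on
almost every slice `S` of `X`. On such a slice, for Borel `B`, additivity of `H^s` and
subadditivity of `H^s_∞` give `H^s(B ∩ S) + H^s(S \ B) = H^s_∞(S) ≤ H^s_∞(B ∩ S) + H^s(S \ B)`.

To integrate at all, `t ↦ H^s(X ∩ π⁻¹{t})` must be measurable. `H^s` is the increasing limit of
`δ`-contents computed with open covers only (thickening a cover costs arbitrarily little), and
for compact `X` each of these is upper semicontinuous in `t`, because an open cover of one fibre
covers all nearby fibres.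
-/

open Filter Topology Metric
open scoped NNReal

lemma exists_pos_rpow_add_two_mul_le {d δ ε : ℝ≥0∞} (s : ℝ) (hdδ : d < δ) (hε : ε ≠ 0) :
    ∃ r : ℝ≥0, 0 < r ∧ (d + 2 * r) ^ s ≤ d ^ s + ε ∧ d + 2 * r < δ := by
  have hcont : Tendsto (fun r : ℝ≥0 => d + 2 * (r : ℝ≥0∞)) (𝓝[>] 0) (𝓝 d) := by
    have : Continuous fun r : ℝ≥0 => d + 2 * (r : ℝ≥0∞) := by fun_prop (disch := simp)
    simpa using this.tendsto 0 |>.mono_left nhdsWithin_le_nhds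
  have hpow : ∀ᶠ r : ℝ≥0 in 𝓝[>] 0, (d + 2 * (r : ℝ≥0∞)) ^ s ≤ d ^ s + ε := by
    rcases eq_or_ne (d ^ s) ⊤ with htop | htop
    · simp [htop]
    · exact ((ENNReal.continuous_rpow_const.tendsto d).comp hcont).eventually_le_const
        (ENNReal.lt_add_right htop hε)
  exact ((eventually_mem_nhdsWithin.and hpow).and (hcont.eventually_lt_const hdδ)).exists.imp
    fun r ⟨⟨hr, h₁⟩, h₂⟩ => ⟨hr, h₁, h₂⟩

section OpenCoverContent

variable {α : Type*} [PseudoEMetricSpace α]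

def openCoverContent (s : ℝ) (δ : ℝ≥0∞) (A : Set α) : ℝ≥0∞ :=
  ⨅ (U : ℕ → Set α) (_ : A ⊆ ⋃ n, U n) (_ : ∀ n, IsOpen (U n) ∧ ediam (U n) < δ),
    ∑' n, ediam (U n) ^ s

lemma openCoverContent_le_tsum {s : ℝ} (hs : 0 ≤ s) {δ : ℝ≥0∞} {A : Set α} {U : ℕ → Set α}
    (hA : A ⊆ ⋃ n, U n) (hU : ∀ n, ediam (U n) < δ) :
    openCoverContent s δ A ≤ ∑' n, ediam (U n) ^ s := by
  refine ENNReal.le_of_forall_pos_le_add fun ε hε _ => ?_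
  obtain ⟨ε', hε', hε'_sum⟩ :=
    ENNReal.exists_pos_sum_of_countable' (ENNReal.coe_ne_zero.2 hε.ne') ℕ
  choose r hr hpow hdiam using fun n => exists_pos_rpow_add_two_mul_le s (hU n) (hε' n).ne'
  have hcover : A ⊆ ⋃ n, thickening (r n) (U n) :=
    hA.trans (iUnion_mono fun n => self_subset_thickening (hr n) _)
  calc openCoverContent s δ A ≤ ∑' n, ediam (thickening (r n) (U n)) ^ s :=
        iInf₂_le_of_le _ hcover <| iInf_le_of_le
          (fun n => ⟨isOpen_thickening, (ediam_thickening_le _).trans_lt (hdiam n)⟩) le_rfl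
    _ ≤ ∑' n, (ediam (U n) ^ s + ε' n) := ENNReal.tsum_le_tsum fun n =>
        (ENNReal.rpow_le_rpow (ediam_thickening_le _) hs).trans (hpow n)
    _ = ∑' n, ediam (U n) ^ s + ∑' n, ε' n := ENNReal.tsum_add
    _ ≤ ∑' n, ediam (U n) ^ s + ε := by gcongr

lemma upperSemicontinuous_openCoverContent_inter_preimage {β : Type*} [TopologicalSpace β]
    [T2Space β] {K : Set α} (hK : IsCompact K) {π : α → β} (hπ : Continuous π) (s : ℝ)
    (δ : ℝ≥0∞) : UpperSemicontinuous fun t => openCoverContent s δ (K ∩ π ⁻¹' {t}) := by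
  intro t c hc
  simp only [openCoverContent, iInf_lt_iff] at hc
  obtain ⟨U, hcover, hU, hsum⟩ := hc
  have hC : IsClosed (π '' (K \ ⋃ n, U n)) :=
    ((hK.diff (isOpen_iUnion fun n => (hU n).1)).image hπ).isClosed
  have ht : t ∉ π '' (K \ ⋃ n, U n) := by
    rintro ⟨x, ⟨hxK, hxU⟩, rfl⟩
    exact hxU (hcover ⟨hxK, rfl⟩)
  filter_upwards [hC.isOpen_compl.mem_nhds ht] with t' ht'
  have hcover' : K ∩ π ⁻¹' {t'} ⊆ ⋃ n, U n := fun x ⟨hxK, hxt'⟩ =>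
    by_contra fun hxU => ht' ⟨x, ⟨hxK, hxU⟩, hxt'⟩
  exact (iInf₂_le_of_le U hcover' <| iInf_le_of_le hU le_rfl).trans_lt hsum

end OpenCoverContent

section HausdorffMeasure

variable {α : Type*} [EMetricSpace α] [MeasurableSpace α] [BorelSpace α]

lemma iSup_openCoverContent_inv_natCast {s : ℝ} (hs : 0 < s) (A : Set α) :
    ⨆ n : ℕ, openCoverContent s (n : ℝ≥0∞)⁻¹ A = μH[s] A := by
  have hsummand (U : Set α) : ⨆ _ : U.Nonempty, ediam U ^ s = ediam U ^ s := by
    rcases U.eq_empty_or_nonempty with rfl | hU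
    · simp [ENNReal.zero_rpow_of_pos hs]
    · simp [hU]
  simp only [Measure.hausdorffMeasure_apply, hsummand]
  refine le_antisymm (iSup_le fun n => ?_) (iSup₂_le fun r hr => ?_)
  · refine le_iSup₂_of_le ((n + 1 : ℕ) : ℝ≥0∞)⁻¹ (by simp) <| le_iInf₂ fun U hA =>
      le_iInf fun hU => openCoverContent_le_tsum hs.le hA fun m => (hU m).trans_lt ?_
    rw [ENNReal.inv_lt_inv]
    exact_mod_cast n.lt_succ_self
  · obtain ⟨n, hn⟩ := ENNReal.exists_inv_nat_lt hr.ne'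
    exact le_iSup_of_le n <| le_iInf₂ fun U hA => le_iInf fun hU =>
      iInf₂_le_of_le U hA <| iInf_le_of_le (fun m => (hU m).2.le.trans hn.le) le_rfl

lemma measurable_hausdorffMeasure_inter_preimage {β : Type*} [TopologicalSpace β] [T2Space β]
    [MeasurableSpace β] [OpensMeasurableSpace β] {K : Set α} (hK : IsCompact K) {π : α → β}
    (hπ : Continuous π) {s : ℝ} (hs : 0 < s) :
    Measurable fun t => μH[s] (K ∩ π ⁻¹' {t}) := by
  simp_rw [← iSup_openCoverContent_inv_natCast hs]
  exact .iSup fun n => (upperSemicontinuous_openCoverContent_inter_preimage hK hπ s _).measurable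

end HausdorffMeasure

lemma MeasureTheory.OuterMeasure.apply_eq_of_subset_of_apply_eq {α : Type*} [MeasurableSpace α]
    (ν : OuterMeasure α) (μ : Measure α) (hνμ : ∀ A, ν A ≤ μ A) {A B : Set α}
    (hB : MeasurableSet B) (hBA : B ⊆ A) (hA : ν A = μ A) (hμA : μ A ≠ ∞) : ν B = μ B := by
  have hdiff : μ (A \ B) ≠ ∞ := measure_ne_top_of_subset sdiff_subset hμA
  refine le_antisymm (hνμ B) ((ENNReal.add_le_add_iff_right hdiff).1 ?_)
  calc μ B + μ (A \ B) = ν A := by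
        rw [hA, ← measure_inter_add_sdiff A hB, inter_eq_right.2 hBA]
    _ ≤ ν B + ν (A \ B) := by
        simpa only [inter_eq_right.2 hBA] using measure_le_inter_add_sdiff ν A B
    _ ≤ ν B + μ (A \ B) := by gcongr; exact hνμ _

lemma hausdorffContent_eq_ofFunction {s : ℝ} (hs : 0 < s) :
    hausdorffContent s =
      OuterMeasure.ofFunction (fun U => ediam U ^ s) (by simp [ENNReal.zero_rpow_of_pos hs]) := by
  funext A
  rw [OuterMeasure.ofFunction_apply]
  rfl

lemma hausdorffContent_le_hausdorffMeasure {s : ℝ} (hs : 0 < s) (A : Set E2) :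
    hausdorffContent s A ≤ μH[s] A :=
  calc hausdorffContent s A ≤ openCoverContent s (0 : ℕ)⁻¹ A :=
        le_iInf₂ fun U hA => le_iInf fun _ => iInf₂_le U hA
    _ ≤ μH[s] A := (le_iSup (fun n : ℕ => openCoverContent s (n : ℝ≥0∞)⁻¹ A) 0).trans_eq
        (iSup_openCoverContent_inv_natCast hs A)

lemma hausdorffContent_eq_hausdorffMeasure_of_subset {s : ℝ} (hs : 0 < s) {A B : Set E2}
    (hB : MeasurableSet B) (hBA : B ⊆ A) (hA : hausdorffContent s A = μH[s] A)
    (hA_fin : μH[s] A ≠ ∞) : hausdorffContent s B = μH[s] B := by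
  rw [hausdorffContent_eq_ofFunction hs] at hA ⊢
  refine OuterMeasure.apply_eq_of_subset_of_apply_eq _ _ (fun C => ?_) hB hBA hA hA_fin
  rw [← hausdorffContent_eq_ofFunction hs]
  exact hausdorffContent_le_hausdorffMeasure hs C

theorem stmt4_general (X : Set E2) (hX : IsCompact X) (v : E2)
    (s : ℝ) (hs : 0 < s)
    (heq : ∫⁻ t : ℝ, hausdorffContent s (X ∩ {x | ⟪v, x⟫ = t}) ∂volume =
      ∫⁻ t : ℝ, μH[s] (X ∩ {x | ⟪v, x⟫ = t}) ∂volume)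
    (hfin : (∫⁻ t : ℝ, μH[s] (X ∩ {x | ⟪v, x⟫ = t}) ∂volume) < ⊤)
    (B : Set E2) (hB : MeasurableSet B) (hBX : B ⊆ X) :
    (∫⁻ t : ℝ, hausdorffContent s (B ∩ {x | ⟪v, x⟫ = t}) ∂volume =
      ∫⁻ t : ℝ, μH[s] (B ∩ {x | ⟪v, x⟫ = t}) ∂volume) ∧
    ∀ᵐ t : ℝ ∂volume,
      hausdorffContent s (B ∩ {x | ⟪v, x⟫ = t}) = μH[s] (B ∩ {x | ⟪v, x⟫ = t}) := by
  have hπ : Continuous fun x : E2 => ⟪v, x⟫ := continuous_const.inner continuous_id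
  have hmeas : Measurable fun t => μH[s] (X ∩ {x | ⟪v, x⟫ = t}) :=
    measurable_hausdorffMeasure_inter_preimage hX hπ hs
  have hX_ae : ∀ᵐ t : ℝ ∂volume,
      hausdorffContent s (X ∩ {x | ⟪v, x⟫ = t}) = μH[s] (X ∩ {x | ⟪v, x⟫ = t}) :=
    ae_eq_of_ae_le_of_lintegral_le (.of_forall fun t => hausdorffContent_le_hausdorffMeasure hs _)
      (heq ▸ hfin.ne) hmeas.aemeasurable heq.ge
  have hB_ae : ∀ᵐ t : ℝ ∂volume,
      hausdorffContent s (B ∩ {x | ⟪v, x⟫ = t}) = μH[s] (B ∩ {x | ⟪v, x⟫ = t}) := by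
    filter_upwards [hX_ae, ae_lt_top hmeas hfin.ne] with t hXt hXt_fin
    exact hausdorffContent_eq_hausdorffMeasure_of_subset hs
      (hB.inter (isClosed_singleton.preimage hπ).measurableSet) (inter_subset_inter_left _ hBX)
      hXt hXt_fin.ne
  exact ⟨lintegral_congr_ae hB_ae, hB_ae⟩

/-- If the integrals over `t` of the Hausdorff content and the Hausdorff measure of
the slices `X ∩ proj_V⁻¹(t)` agree and are finite, then the same equality holds with
`X` replaced by any Borel subset `B ⊆ X`; in particular the content and measure of
the slices of `B` agree for a.e. `t`.  The line `V` is spanned by the unit vector `v`. -/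
theorem stmt4 (X : Set E2) (hX : IsCompact X) (v : E2) (hv : ‖v‖ = 1)
    (s : ℝ) (hs : 0 < s)
    (heq : ∫⁻ t : ℝ, hausdorffContent s (X ∩ {x | ⟪v, x⟫ = t}) ∂volume =
      ∫⁻ t : ℝ, μH[s] (X ∩ {x | ⟪v, x⟫ = t}) ∂volume)
    (hfin : (∫⁻ t : ℝ, μH[s] (X ∩ {x | ⟪v, x⟫ = t}) ∂volume) < ⊤)
    (B : Set E2) (hB : MeasurableSet B) (hBX : B ⊆ X) :
    (∫⁻ t : ℝ, hausdorffContent s (B ∩ {x | ⟪v, x⟫ = t}) ∂volume =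
      ∫⁻ t : ℝ, μH[s] (B ∩ {x | ⟪v, x⟫ = t}) ∂volume) ∧
    ∀ᵐ t : ℝ ∂volume,
      hausdorffContent s (B ∩ {x | ⟪v, x⟫ = t}) = μH[s] (B ∩ {x | ⟪v, x⟫ = t}) :=
  stmt4_general X hX v s hs heq hfin B hB hBX

end
end

section
/- Marstrand's slicing inequality: for any set E ⊆ ℝ², any one-dimensional subspace V ⊆ ℝ², and any s ≥ 1, H^s(E) ≥ c · ∫ H^{s−1}(E ∩ proj_V^{-1}(t)) dλ_V(t) for some absolute constant c > 0 (depending only on s). -/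
/-!
Let `f : X → ℝ` be 1-Lipschitz. Cover `E` by countably many sets `Cᵢ` of diameter at most `δ`
with `∑ diam(Cᵢ)^s` close to `H^s(E)`. Then `closure (f Cᵢ)` has Lebesgue measure at most
`diam Cᵢ`, and the slice `E ∩ f⁻¹{t}` is covered by the `Cᵢ` with `t ∈ closure (f Cᵢ)`.
Integrating the resulting bound `∑_{t ∈ closure (f Cᵢ)} diam(Cᵢ)^(s-1)` in `t` gives at most
`∑ diam(Cᵢ)^s`, and Fatou's lemma lets `δ → 0`. With `f = ⟪v, ·⟫` this is the slicing inequality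
with `c = 1`.
-/

open MeasureTheory Set
open scoped ENNReal RealInnerProductSpace

noncomputable section

open Filter Metric Topology

theorem ENNReal.rpow_sub_one_mul_self_le (x : ℝ≥0∞) (s : ℝ) : x ^ (s - 1) * x ≤ x ^ s := by
  rcases eq_or_ne x 0 with rfl | hx₀
  · simp
  rcases eq_or_ne x ⊤ with rfl | hx
  · rcases lt_trichotomy s 1 with hs | rfl | hs
    · simp [sub_neg.2 hs]
    · simp
    · simp [ENNReal.top_rpow_of_pos (sub_pos.2 hs),
        ENNReal.top_rpow_of_pos (zero_lt_one.trans hs)]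
  refine le_of_eq ?_
  calc x ^ (s - 1) * x = x ^ (s - 1 + 1) := by
        rw [ENNReal.rpow_add _ _ hx₀ hx, ENNReal.rpow_one]
    _ = x ^ s := by rw [sub_add_cancel]

theorem LipschitzWith.volume_closure_image_le {X : Type*} [PseudoEMetricSpace X] {K : NNReal}
    {f : X → ℝ} (hf : LipschitzWith K f) (C : Set X) :
    volume (closure (f '' C)) ≤ K * ediam C :=
  (Real.volume_le_diam _).trans ((ediam_closure _).le.trans (hf.ediam_image_le C))

theorem lintegral_tsum_indicator_closure_image_le {X ι : Type*} [PseudoEMetricSpace X]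
    [Countable ι] {f : X → ℝ} (hf : LipschitzWith 1 f) (s : ℝ) (c : ι → Set X) :
    ∫⁻ t, ∑' i, (closure (f '' c i)).indicator (fun _ => ediam (c i) ^ (s - 1)) t ≤
      ∑' i, ⨆ _ : (c i).Nonempty, ediam (c i) ^ s := by
  rw [lintegral_tsum fun i =>
    (measurable_const.indicator isClosed_closure.measurableSet).aemeasurable]
  refine ENNReal.tsum_le_tsum fun i => ?_
  rcases (c i).eq_empty_or_nonempty with hempty | hne
  · simp [hempty]
  calc ∫⁻ t, (closure (f '' c i)).indicator (fun _ => ediam (c i) ^ (s - 1)) t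
      ≤ ediam (c i) ^ (s - 1) * volume (closure (f '' c i)) := lintegral_indicator_const_le _ _
    _ ≤ ediam (c i) ^ (s - 1) * ediam (c i) := by
        gcongr; simpa using hf.volume_closure_image_le (c i)
    _ ≤ ediam (c i) ^ s := ENNReal.rpow_sub_one_mul_self_le _ s
    _ ≤ ⨆ _ : (c i).Nonempty, ediam (c i) ^ s := le_iSup_of_le hne le_rfl

section Hausdorff

variable {X : Type*} [EMetricSpace X] [MeasurableSpace X] [BorelSpace X]

theorem exists_cover_ediam_le_tsum_lt {d : ℝ} {E : Set X} {a : ℝ≥0∞} (ha : μH[d] E < a)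
    {r : ℝ≥0∞} (hr : 0 < r) :
    ∃ c : ℕ → Set X, E ⊆ ⋃ i, c i ∧ (∀ i, ediam (c i) ≤ r) ∧
      ∑' i, ⨆ _ : (c i).Nonempty, ediam (c i) ^ d < a := by
  have h : (⨅ (c : ℕ → Set X) (_ : E ⊆ ⋃ i, c i) (_ : ∀ i, ediam (c i) ≤ r),
      ∑' i, ⨆ _ : (c i).Nonempty, ediam (c i) ^ d) < a :=
    lt_of_le_of_lt (by rw [Measure.hausdorffMeasure_apply]; exact le_iSup₂_of_le r hr le_rfl) ha
  simpa only [iInf_lt_iff, exists_prop] using h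

theorem hausdorffMeasure_inter_preimage_le_liminf {ι : Type*} [Countable ι] (d : ℝ) (E : Set X)
    (f : X → ℝ) (t : ℝ) {r : ℕ → ℝ≥0∞} (hr : Tendsto r atTop (𝓝 0)) (c : ℕ → ι → Set X)
    (hcov : ∀ n, E ⊆ ⋃ i, c n i) (hdiam : ∀ n i, ediam (c n i) ≤ r n) :
    μH[d] (E ∩ f ⁻¹' {t}) ≤
      liminf (fun n => ∑' i, (closure (f '' c n i)).indicator (fun _ => ediam (c n i) ^ d) t)
        atTop := by
  -- Only the pieces meeting the slice are kept: an empty piece would still contribute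
  -- `ediam ∅ ^ d = 0 ^ d`, which is not `0` when `d ≤ 0`.
  have key := Measure.hausdorffMeasure_le_liminf_tsum d (E ∩ f ⁻¹' {t}) r hr
    (fun n (i : {i | t ∈ closure (f '' c n i)}) => c n i)
    (Eventually.of_forall fun n i => hdiam n i) (Eventually.of_forall fun n x hx => ?_)
  · convert key using 3 with n
    exact (tsum_subtype {i | t ∈ closure (f '' c n i)} fun i => ediam (c n i) ^ d).symm
  · obtain ⟨i, hi⟩ := mem_iUnion.1 (hcov n hx.1)
    exact mem_iUnion.2 ⟨⟨i, subset_closure ⟨x, hi, hx.2⟩⟩, hi⟩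

theorem LipschitzWith.lintegral_hausdorffMeasure_inter_preimage_le {f : X → ℝ}
    (hf : LipschitzWith 1 f) (s : ℝ) (E : Set X) :
    ∫⁻ t, μH[s - 1] (E ∩ f ⁻¹' {t}) ≤ μH[s] E := by
  refine le_of_forall_gt_imp_ge_of_dense fun a ha => ?_
  choose c hcov hdiam hsum using fun n : ℕ =>
    exists_cover_ediam_le_tsum_lt ha (ENNReal.inv_pos.2 (ENNReal.natCast_ne_top n))
  let G n t := ∑' i, (closure (f '' c n i)).indicator (fun _ => ediam (c n i) ^ (s - 1)) t
  calc ∫⁻ t, μH[s - 1] (E ∩ f ⁻¹' {t})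
      ≤ ∫⁻ t, liminf (fun n => G n t) atTop := lintegral_mono fun t =>
        hausdorffMeasure_inter_preimage_le_liminf (s - 1) E f t
          ENNReal.tendsto_inv_nat_nhds_zero c hcov hdiam
    _ ≤ liminf (fun n => ∫⁻ t, G n t) atTop := lintegral_liminf_le fun n =>
        Measurable.tsum fun i => measurable_const.indicator isClosed_closure.measurableSet
    _ ≤ a := liminf_le_of_frequently_le (Frequently.of_forall fun n =>
        (lintegral_tsum_indicator_closure_image_le hf s (c n)).trans (hsum n).le)

end Hausdorff

theorem stmt5_general (s : ℝ) :
    ∃ c : ℝ, 0 < c ∧ ∀ (E : Set E2) (v : E2), ‖v‖ = 1 →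
      ENNReal.ofReal c * ∫⁻ t : ℝ, μH[s - 1] (E ∩ {x | ⟪v, x⟫ = t}) ∂volume ≤
        μH[s] E := by
  refine ⟨1, one_pos, fun E v hv => ?_⟩
  have hf : LipschitzWith 1 fun x : E2 => ⟪v, x⟫ := by
    have hnorm : ‖innerSL ℝ v‖₊ = 1 := by ext; simp [innerSL_apply_norm, hv]
    simpa [hnorm] using (innerSL ℝ v).lipschitz
  rw [ENNReal.ofReal_one, one_mul]
  exact hf.lintegral_hausdorffMeasure_inter_preimage_le s E

/-- Marstrand's slicing inequality: for every `s ≥ 1` there is a constant `c > 0`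
(depending only on `s`) such that for any set `E ⊆ ℝ²` and any one-dimensional
subspace `V` (spanned by a unit vector `v`),
`H^s(E) ≥ c · ∫ H^{s−1}(E ∩ proj_V⁻¹(t)) dλ(t)`. -/
theorem stmt5 (s : ℝ) (hs : 1 ≤ s) :
    ∃ c : ℝ, 0 < c ∧ ∀ (E : Set E2) (v : E2), ‖v‖ = 1 →
      ENNReal.ofReal c * ∫⁻ t : ℝ, μH[s - 1] (E ∩ {x | ⟪v, x⟫ = t}) ∂volume ≤
        μH[s] E :=
  stmt5_general s

end
end

section
/- Let 𝓛 be a Ruelle–Perron–Frobenius transfer operator on C(Σ) with Hölder potential g, with positive eigenfunction p (𝓛p = p), conformal measure ν (𝓛*ν = ν, ∫p dν = 1), and convergence 𝓛ⁿf → p·∫f dν uniformly for all continuous f. If h : Σ → [0,∞) is upper semi-continuous and satisfies h ≤ 𝓛h pointwise, then h = p · ∫h dν everywhere; in particular either h ≡ 0 or inf_Σ h > 0. -/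
/-!
The functions `cylinderSup h m`, suprema of `h` over cylinders of length `m`, are locally constant
and decrease to `h` because `h` is upper semicontinuous. Since `𝓛` is monotone and `h ≤ 𝓛 h`,
`h ≤ 𝓛ⁿ h ≤ 𝓛ⁿ (cylinderSup h m) → p ∫ cylinderSup h m dν`, and letting `m → ∞` gives
`h ≤ p ∫ h dν`. Both sides have the same `ν`-integral (as `∫ p dν = 1`) and their difference is
lower semicontinuous, so they differ only on an open `ν`-null set. Conformality of `ν` gives every
cylinder positive mass, so that set is empty. The dichotomy then comes from `min p > 0`.
-/

open MeasureTheory Filter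
open scoped ENNReal

noncomputable section

variable {ι : Type}

/-- Prepending a symbol to an infinite word: `cons k ī = kī`. -/
def consW (k : ι) (ib : ℕ → ι) : ℕ → ι := fun n => Nat.casesOn n k ib

/-- The Ruelle–Perron–Frobenius transfer operator with potential `g`:
`(𝓛 f)(ī) = ∑ₖ e^{g(kī)} f(kī)`. -/
noncomputable def transferOp [Fintype ι] (g : (ℕ → ι) → ℝ) (f : (ℕ → ι) → ℝ) :
    (ℕ → ι) → ℝ :=
  fun ib => ∑ k : ι, Real.exp (g (consW k ib)) * f (consW k ib)

open PiNat Topology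

section Cylinders

variable [TopologicalSpace ι] [DiscreteTopology ι]

theorem exists_cylinder_subset_of_mem_nhds {x : ℕ → ι} {U : Set (ℕ → ι)} (hU : U ∈ 𝓝 x) :
    ∃ n, PiNat.cylinder x n ⊆ U := by
  obtain ⟨_, ⟨y, n, rfl⟩, hx, hsub⟩ :=
    (isTopologicalBasis_cylinders fun _ => ι).mem_nhds_iff.1 hU
  rw [mem_cylinder_iff_eq] at hx
  exact ⟨n, hx ▸ hsub⟩

theorem continuous_of_forall_mem_cylinder_eq {Y : Type*} [TopologicalSpace Y]
    {F : (ℕ → ι) → Y} (n : ℕ) (hF : ∀ x, ∀ y ∈ PiNat.cylinder x n, F y = F x) : Continuous F :=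
  IsLocallyConstant.continuous <| (IsLocallyConstant.iff_exists_open F).2 fun x =>
    ⟨PiNat.cylinder x n, isOpen_cylinder _ x n, self_mem_cylinder x n, hF x⟩

theorem continuous_indicator_cylinder (w : ℕ → ι) (n : ℕ) :
    Continuous ((PiNat.cylinder w n).indicator (1 : (ℕ → ι) → ℝ)) := by
  refine continuous_of_forall_mem_cylinder_eq n fun x y hy => ?_
  have hmem : y ∈ PiNat.cylinder w n ↔ x ∈ PiNat.cylinder w n := by
    rw [mem_cylinder_comm w y, mem_cylinder_comm w x, mem_cylinder_iff_eq.1 hy]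
  classical
  simp only [Set.indicator_apply, hmem, Pi.one_apply]

theorem isOpenPosMeasure_of_measure_cylinder_ne_zero {m : MeasurableSpace (ℕ → ι)}
    (μ : Measure (ℕ → ι)) (hμ : ∀ x n, μ (PiNat.cylinder x n) ≠ 0) : μ.IsOpenPosMeasure where
  open_pos _ hU := fun ⟨x, hx⟩ hU0 =>
    let ⟨n, hn⟩ := exists_cylinder_subset_of_mem_nhds (hU.mem_nhds hx)
    hμ x n (measure_mono_null hn hU0)

end Cylinders

section CylinderSup

def cylinderSup (h : (ℕ → ι) → ℝ) (n : ℕ) (x : ℕ → ι) : ℝ :=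
  sSup (h '' PiNat.cylinder x n)

variable {h : (ℕ → ι) → ℝ}

theorem le_cylinderSup (hb : BddAbove (Set.range h)) (n : ℕ) (x : ℕ → ι) :
    h x ≤ cylinderSup h n x :=
  le_csSup (hb.mono (Set.image_subset_range _ _)) (Set.mem_image_of_mem h (self_mem_cylinder x n))

theorem cylinderSup_le {M : ℝ} (hM : ∀ y, h y ≤ M) (n : ℕ) (x : ℕ → ι) :
    cylinderSup h n x ≤ M :=
  csSup_le (Set.nonempty_of_mem (self_mem_cylinder x n) |>.image h)
    (Set.forall_mem_image.2 fun y _ => hM y)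

variable [TopologicalSpace ι] [DiscreteTopology ι]

theorem continuous_cylinderSup (h : (ℕ → ι) → ℝ) (n : ℕ) : Continuous (cylinderSup h n) :=
  continuous_of_forall_mem_cylinder_eq n fun x y hy => by
    simp only [cylinderSup, mem_cylinder_iff_eq.1 hy]

theorem tendsto_cylinderSup (husc : UpperSemicontinuous h) (hb : BddAbove (Set.range h))
    (x : ℕ → ι) : Tendsto (fun n => cylinderSup h n x) atTop (𝓝 (h x)) := by
  refine tendsto_order.2 ⟨fun a ha => Eventually.of_forall fun n =>
    ha.trans_le (le_cylinderSup hb n x), fun b hb => ?_⟩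
  obtain ⟨b', hxb', hb'b⟩ := exists_between hb
  obtain ⟨n, hn⟩ := exists_cylinder_subset_of_mem_nhds (husc x b' hxb')
  filter_upwards [eventually_ge_atTop n] with m hm
  refine (csSup_le (Set.nonempty_of_mem (self_mem_cylinder x m) |>.image h) ?_).trans_lt hb'b
  exact Set.forall_mem_image.2 fun y hy => (hn (cylinder_anti x hm hy)).le

end CylinderSup

section Semicontinuous

variable {X : Type*} [TopologicalSpace X] {f : X → ℝ}

theorem UpperSemicontinuous.exists_forall_le_of_compactSpace [CompactSpace X]
    (hf : UpperSemicontinuous f) : ∃ M, ∀ x, f x ≤ M := by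
  obtain ⟨M, hM⟩ := (hf.upperSemicontinuousOn Set.univ).bddAbove_of_isCompact isCompact_univ
  exact ⟨M, fun x => hM ⟨x, trivial, rfl⟩⟩

theorem UpperSemicontinuous.integrable_of_nonneg [CompactSpace X] [MeasurableSpace X]
    [OpensMeasurableSpace X] {μ : Measure X} [IsFiniteMeasure μ] (hf : UpperSemicontinuous f) (hf0 : 0 ≤ f) :
    Integrable f μ := by
  obtain ⟨M, hM⟩ := hf.exists_forall_le_of_compactSpace
  refine Integrable.of_bound hf.measurable.aestronglyMeasurable M (Eventually.of_forall fun x => ?_)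
  rw [Real.norm_eq_abs, abs_of_nonneg (hf0 x)]
  exact hM x

/-- The set `{f < g}` is open and null, hence empty. -/
theorem UpperSemicontinuous.eq_of_le_of_integral_eq [MeasurableSpace X] {μ : Measure X}
    [μ.IsOpenPosMeasure] {g : X → ℝ} (hf : UpperSemicontinuous f) (hg : Continuous g) (hfg : f ≤ g)
    (hfi : Integrable f μ) (hgi : Integrable g μ) (hint : ∫ x, f x ∂μ = ∫ x, g x ∂μ) :
    f = g := by
  have hae : g - f =ᵐ[μ] 0 :=
    (integral_eq_zero_iff_of_nonneg (sub_nonneg.2 hfg) (hgi.sub hfi)).1 (by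
      rw [Pi.sub_def, integral_sub hgi hfi, hint, sub_self])
  have hopen : IsOpen {x | f x < g x} := by
    simpa only [Set.preimage, Set.mem_Iio, Pi.neg_apply, ← sub_eq_add_neg, sub_neg] using
      (hf.add hg.neg.upperSemicontinuous).isOpen_preimage 0
  have hnull : μ {x | f x < g x} = 0 :=
    measure_mono_null (fun x (hx : f x < g x) => sub_ne_zero.2 hx.ne') (ae_iff.1 hae)
  have hempty := (hopen.measure_eq_zero_iff μ).1 hnull
  funext x
  exact (hfg x).eq_of_not_lt fun hx => hempty.subset hx

end Semicontinuous

theorem consW_mem_cylinder_succ {x y : ℕ → ι} {n : ℕ}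
    (hy : y ∈ PiNat.cylinder (fun i => x (i + 1)) n) : consW (x 0) y ∈ PiNat.cylinder x (n + 1)
  | 0, _ => rfl
  | i + 1, hi => hy i (Nat.lt_of_succ_lt_succ hi)

theorem continuous_consW [TopologicalSpace ι] (k : ι) : Continuous (consW k : (ℕ → ι) → ℕ → ι) :=
  continuous_pi fun
    | 0 => continuous_const
    | i + 1 => continuous_apply i

section TransferOperator

variable [Fintype ι] {g : (ℕ → ι) → ℝ}

theorem monotone_transferOp (g : (ℕ → ι) → ℝ) : Monotone (transferOp g) := fun _ _ hff' _ =>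
  Finset.sum_le_sum fun _ _ => mul_le_mul_of_nonneg_left (hff' _) (Real.exp_nonneg _)

theorem transferOp_nonneg {f : (ℕ → ι) → ℝ} (hf : 0 ≤ f) : 0 ≤ transferOp g f := fun _ =>
  Finset.sum_nonneg fun _ _ => mul_nonneg (Real.exp_nonneg _) (hf _)

theorem exp_mul_le_transferOp {f : (ℕ → ι) → ℝ} (hf : 0 ≤ f) (k : ι) (x : ℕ → ι) :
    Real.exp (g (consW k x)) * f (consW k x) ≤ transferOp g f x :=
  Finset.single_le_sum (f := fun k => Real.exp (g (consW k x)) * f (consW k x))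
    (fun _ _ => mul_nonneg (Real.exp_nonneg _) (hf _)) (Finset.mem_univ k)

variable [TopologicalSpace ι]

theorem Continuous.transferOp (hg : Continuous g) {f : (ℕ → ι) → ℝ} (hf : Continuous f) :
    Continuous (transferOp g f) :=
  continuous_finsetSum _ fun k _ =>
    (Real.continuous_exp.comp (hg.comp (continuous_consW k))).mul (hf.comp (continuous_consW k))

variable [DiscreteTopology ι] [MeasurableSpace ι] [BorelSpace ι]

/-- Conformality gives `ν [x₀ … xₙ] = ∫ 𝓛 1_{[x₀ … xₙ]} dν ≥ e^{inf g} ν [x₁ … xₙ]`, so by induction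
every cylinder has positive mass. -/
theorem measureReal_cylinder_pos (hg : Continuous g) (ν : Measure (ℕ → ι)) [IsFiniteMeasure ν]
    [NeZero ν] (hνconf : ∀ f : (ℕ → ι) → ℝ, Continuous f →
      ∫ x, transferOp g f x ∂ν = ∫ x, f x ∂ν) (x : ℕ → ι) (n : ℕ) :
    0 < ν.real (PiNat.cylinder x n) := by
  induction n generalizing x with
  | zero => simpa only [PiNat.cylinder_zero] using measureReal_univ_pos
  | succ n ih =>
    set C := PiNat.cylinder x (n + 1)
    set C' := PiNat.cylinder (fun i => x (i + 1)) n
    obtain ⟨m, hm⟩ := (isCompact_range hg).bddBelow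
    have hlower : ∀ y, Real.exp m * C'.indicator 1 y ≤ transferOp g (C.indicator 1) y := by
      intro y
      by_cases hy : y ∈ C'
      · rw [Set.indicator_of_mem hy, Pi.one_apply, mul_one]
        calc Real.exp m ≤ Real.exp (g (consW (x 0) y)) * C.indicator 1 (consW (x 0) y) := by
              rw [Set.indicator_of_mem (consW_mem_cylinder_succ hy), Pi.one_apply, mul_one]
              exact Real.exp_le_exp.2 (hm ⟨_, rfl⟩)
          _ ≤ _ := exp_mul_le_transferOp (Set.indicator_nonneg (fun _ _ => zero_le_one)) _ _
      · rw [Set.indicator_of_notMem hy, mul_zero]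
        exact transferOp_nonneg (Set.indicator_nonneg (fun _ _ => zero_le_one)) y
    have hC := continuous_indicator_cylinder x (n + 1)
    have hC' := continuous_indicator_cylinder (fun i => x (i + 1)) n
    calc 0 < Real.exp m * ν.real C' := mul_pos (Real.exp_pos m) (ih _)
      _ = ∫ y, Real.exp m * C'.indicator 1 y ∂ν := by
        rw [integral_const_mul, integral_indicator_one (PiNat.isOpen_cylinder _ _ _).measurableSet]
      _ ≤ ∫ y, transferOp g (C.indicator 1) y ∂ν :=
        integral_mono
          ((hC'.integrable_of_hasCompactSupport (.of_compactSpace _)).const_mul _)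
          ((hg.transferOp hC).integrable_of_hasCompactSupport (.of_compactSpace _)) hlower
      _ = ν.real C := by
        rw [hνconf _ hC, integral_indicator_one (PiNat.isOpen_cylinder _ _ _).measurableSet]

theorem tendsto_integral_cylinderSup {ν : Measure (ℕ → ι)} [IsFiniteMeasure ν]
    {h : (ℕ → ι) → ℝ} (hh0 : 0 ≤ h) (husc : UpperSemicontinuous h) :
    Tendsto (fun n => ∫ x, cylinderSup h n x ∂ν) atTop (𝓝 (∫ x, h x ∂ν)) := by
  obtain ⟨M, hM⟩ := husc.exists_forall_le_of_compactSpace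
  have hb : BddAbove (Set.range h) := ⟨M, Set.forall_mem_range.2 hM⟩
  refine tendsto_integral_of_dominated_convergence (fun _ => M)
    (fun n => (continuous_cylinderSup h n).aestronglyMeasurable) (integrable_const M)
    (fun n => Eventually.of_forall fun x => ?_)
    (Eventually.of_forall (tendsto_cylinderSup husc hb))
  rw [Real.norm_eq_abs, abs_of_nonneg ((hh0 x).trans (le_cylinderSup hb n x))]
  exact cylinderSup_le hM n x

theorem le_mul_integral_of_le_transferOp {ν : Measure (ℕ → ι)} [IsFiniteMeasure ν]
    {p h : (ℕ → ι) → ℝ}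
    (hconv : ∀ f : (ℕ → ι) → ℝ, Continuous f → ∀ x,
      Tendsto (fun n => (transferOp g)^[n] f x) atTop (𝓝 (p x * ∫ y, f y ∂ν)))
    (hh0 : 0 ≤ h) (husc : UpperSemicontinuous h) (hsub : h ≤ transferOp g h) (x : ℕ → ι) :
    h x ≤ p x * ∫ y, h y ∂ν := by
  obtain ⟨M, hM⟩ := husc.exists_forall_le_of_compactSpace
  have hb : BddAbove (Set.range h) := ⟨M, Set.forall_mem_range.2 hM⟩
  have hle : ∀ m, h x ≤ p x * ∫ y, cylinderSup h m y ∂ν := fun m =>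
    ge_of_tendsto' (hconv _ (continuous_cylinderSup h m) x) fun n =>
      ((monotone_transferOp g).monotone_iterate_of_le_map hsub n.zero_le x).trans
        ((monotone_transferOp g).iterate n (le_cylinderSup hb m) x)
  exact ge_of_tendsto' ((tendsto_integral_cylinderSup hh0 husc).const_mul (p x)) hle

end TransferOperator

theorem stmt9_general [Fintype ι]
    [TopologicalSpace ι] [DiscreteTopology ι] [MeasurableSpace ι] [BorelSpace ι]
    (g : (ℕ → ι) → ℝ) (hg : Continuous g)
    (p : (ℕ → ι) → ℝ) (hpc : Continuous p) (hppos : ∀ ib, 0 < p ib)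
    (ν : Measure (ℕ → ι)) [IsProbabilityMeasure ν]
    (hνconf : ∀ f : (ℕ → ι) → ℝ, Continuous f →
      ∫ x, transferOp g f x ∂ν = ∫ x, f x ∂ν)
    (hpnorm : ∫ x, p x ∂ν = 1)
    (hconv : ∀ f : (ℕ → ι) → ℝ, Continuous f →
      TendstoUniformly (fun n => (transferOp g)^[n] f) (fun ib => p ib * ∫ x, f x ∂ν) atTop)
    (h : (ℕ → ι) → ℝ) (hh0 : ∀ ib, 0 ≤ h ib) (husc : UpperSemicontinuous h)
    (hsub : ∀ ib, h ib ≤ transferOp g h ib) :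
    (∀ ib, h ib = p ib * ∫ x, h x ∂ν) ∧
      ((∀ ib, h ib = 0) ∨ ∃ ε : ℝ, 0 < ε ∧ ∀ ib, ε ≤ h ib) := by
  set c := ∫ x, h x ∂ν
  have hle : ∀ x, h x ≤ p x * c :=
    le_mul_integral_of_le_transferOp (fun f hf x => (hconv f hf).tendsto_at x) hh0 husc hsub
  have := isOpenPosMeasure_of_measure_cylinder_ne_zero ν fun x n =>
    (measureReal_ne_zero_iff (measure_ne_top ν _)).1 (measureReal_cylinder_pos hg ν hνconf x n).ne'
  have hpi : Integrable p ν := hpc.integrable_of_hasCompactSupport (.of_compactSpace p)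
  have heq : h = fun x => p x * c :=
    husc.eq_of_le_of_integral_eq (hpc.mul continuous_const) hle (husc.integrable_of_nonneg hh0)
      (hpi.mul_const c) (by rw [integral_mul_const, hpnorm, one_mul])
  refine ⟨congrFun heq, ?_⟩
  have hc0 : 0 ≤ c := integral_nonneg hh0
  rcases hc0.eq_or_lt with hc | hc
  · exact .inl fun x => by rw [congrFun heq, ← hc, mul_zero]
  · have := nonempty_of_isProbabilityMeasure ν
    obtain ⟨y, -, hy⟩ := isCompact_univ.exists_isMinOn Set.univ_nonempty hpc.continuousOn
    exact .inr ⟨p y * c, mul_pos (hppos y) hc, fun x => heq ▸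
      mul_le_mul_of_nonneg_right (hy (Set.mem_univ x)) hc0⟩

/-- If `𝓛` is an RPF transfer operator on `C(Σ)` with Hölder potential `g`, positive
eigenfunction `p` (`𝓛p = p`), conformal measure `ν` (`𝓛*ν = ν`, `∫ p dν = 1`) and
uniform convergence `𝓛ⁿ f → p ∫ f dν` for continuous `f`, then any upper
semi-continuous `h : Σ → [0, ∞)` with `h ≤ 𝓛h` satisfies `h = p · ∫ h dν`;
in particular either `h ≡ 0` or `inf h > 0`. -/
theorem stmt9 [Fintype ι] [Nonempty ι]
    [TopologicalSpace ι] [DiscreteTopology ι] [MeasurableSpace ι] [BorelSpace ι]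
    (g : (ℕ → ι) → ℝ) (hg : Continuous g)
    (hgHolder : ∃ c : ℝ, 0 < c ∧ ∃ α : ℝ, 0 < α ∧ ∀ (ib jb : ℕ → ι) (n : ℕ),
      (∀ k < n, ib k = jb k) → |g ib - g jb| ≤ c * (2 : ℝ) ^ (-(α * n)))
    (p : (ℕ → ι) → ℝ) (hpc : Continuous p) (hppos : ∀ ib, 0 < p ib)
    (hpfix : transferOp g p = p)
    (ν : Measure (ℕ → ι)) [IsProbabilityMeasure ν]
    (hνconf : ∀ f : (ℕ → ι) → ℝ, Continuous f →
      ∫ x, transferOp g f x ∂ν = ∫ x, f x ∂ν)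
    (hpnorm : ∫ x, p x ∂ν = 1)
    (hconv : ∀ f : (ℕ → ι) → ℝ, Continuous f →
      TendstoUniformly (fun n => (transferOp g)^[n] f) (fun ib => p ib * ∫ x, f x ∂ν) atTop)
    (h : (ℕ → ι) → ℝ) (hh0 : ∀ ib, 0 ≤ h ib) (husc : UpperSemicontinuous h)
    (hsub : ∀ ib, h ib ≤ transferOp g h ib) :
    (∀ ib, h ib = p ib * ∫ x, h x ∂ν) ∧
      ((∀ ib, h ib = 0) ∨ ∃ ε : ℝ, 0 < ε ∧ ∀ ib, ε ≤ h ib) :=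
  stmt9_general g hg p hpc hppos ν hνconf hpnorm hconv h hh0 husc hsub

end
end

section
/- Let {x ↦ c_i x + τ_i}_{i∈𝒜} be a self-similar IFS on ℝ with max_i |c_i| < 1/2, and let Π(ī) ∈ ℝ^𝒜 be the vector with j-th coordinate Σ_{k=1}^∞ δ_{i_k}^j c_{i₁}⋯c_{i_{k−1}}. Then for ī ≠ j̄ ∈ Σ, ‖Π(ī) − Π(j̄)‖ ≥ |c_{ī∧j̄}| · (1 − 2max_i|c_i|)/(1 − max_i|c_i|) > 0, where ī∧j̄ is the longest common prefix and c_{w} = c_{w₁}⋯c_{w_n} for a finite word w. -/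
/-!
Cancelling the common prefix: `Π` is self-similar, `Π(ī) = e_{i₀} + c_{i₀} Π(σī)`, so if `ī, j̄`
share their first `n` letters then `Π(ī) − Π(j̄) = c_{ī∧j̄} (Π(σⁿī) − Π(σⁿj̄))`. If the first
letters `a ≠ b` differ, then `Π(ī) − Π(j̄) = e_a − e_b + c_a Π(σī) − c_b Π(σj̄)`, and the
functional `x ↦ x_a − x_b`, of norm at most `2`, is `2` on `e_a − e_b` but at most `1/(1 − M)`
in absolute value on every `Π(w)` (`M = maxᵢ |cᵢ|`): the `k`-th term of the series for `Π(w)`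
lies on a single coordinate and has size at most `Mᵏ`. Hence `2 ‖Π(ī) − Π(j̄)‖ ≥ 2 − 2M/(1 − M)`.
-/

open Finset

noncomputable section

/-- The coefficient vector `Π(ī) ∈ ℝ^𝒜` with `j`-th coordinate
`∑ₖ δ_{ī(k)}^j c_{ī(0)} ⋯ c_{ī(k−1)}`, so that `π_τ(ī) = ⟨τ, Π(ī)⟩`. -/
noncomputable def PiVec {ι : Type} [Fintype ι] [DecidableEq ι] (c : ι → ℝ)
    (ib : ℕ → ι) : EuclideanSpace ℝ ι :=
  (WithLp.equiv 2 (ι → ℝ)).symm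
    (fun j => ∑' k : ℕ, (if ib k = j then (1 : ℝ) else 0) * ∏ l ∈ Finset.range k, c (ib l))

def prefixProd {ι : Type} (c : ι → ℝ) (b : ℕ → ι) (n : ℕ) : ℝ :=
  ∏ l ∈ range n, c (b l)

section PrefixProd

variable {ι : Type} (c : ι → ℝ) {M : ℝ}

theorem prefixProd_succ (b : ℕ → ι) (n : ℕ) :
    prefixProd c b (n + 1) = c (b 0) * prefixProd c (fun k => b (k + 1)) n := by
  simp only [prefixProd, prod_range_succ', mul_comm]

theorem abs_prefixProd_le (hM : ∀ i, |c i| ≤ M) (b : ℕ → ι) (n : ℕ) :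
    |prefixProd c b n| ≤ M ^ n := by
  rw [prefixProd, abs_prod]
  exact (prod_le_prod (fun _ _ => abs_nonneg _) fun l _ => hM (b l)).trans_eq
    (by rw [prod_const, card_range])

theorem hasSum_pow_of_abs_le (hM : ∀ i, |c i| ≤ M) (hM1 : M < 1) (i : ι) :
    HasSum (fun k => M ^ k) (1 - M)⁻¹ :=
  hasSum_geometric_of_lt_one ((abs_nonneg _).trans (hM i)) hM1

theorem summable_piVec_term [DecidableEq ι] (hM : ∀ i, |c i| ≤ M) (hM1 : M < 1) (b : ℕ → ι)
    (j : ι) :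
    Summable fun k => (if b k = j then (1 : ℝ) else 0) * prefixProd c b k := by
  refine (hasSum_pow_of_abs_le c hM hM1 (b 0)).summable.of_norm_bounded fun k => ?_
  rw [Real.norm_eq_abs, abs_mul]
  refine (mul_le_of_le_one_left (abs_nonneg _) ?_).trans (abs_prefixProd_le c hM b k)
  split_ifs <;> simp

end PrefixProd

theorem abs_apply_sub_apply_le_two_mul_norm {ι : Type} [Fintype ι] (x : EuclideanSpace ℝ ι)
    (j j' : ι) : |x j - x j'| ≤ 2 * ‖x‖ := by
  have := PiLp.norm_apply_le x j
  have := PiLp.norm_apply_le x j'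
  simp only [Real.norm_eq_abs] at *
  linarith [abs_sub (x j) (x j')]

section PiVec

variable {ι : Type} [Fintype ι] [DecidableEq ι] (c : ι → ℝ) {M : ℝ}

theorem piVec_apply (b : ℕ → ι) (j : ι) :
    PiVec c b j = ∑' k, (if b k = j then (1 : ℝ) else 0) * prefixProd c b k :=
  rfl

theorem piVec_apply_eq_add (hM : ∀ i, |c i| ≤ M) (hM1 : M < 1) (b : ℕ → ι) (j : ι) :
    PiVec c b j = (if b 0 = j then 1 else 0) + c (b 0) * PiVec c (fun k => b (k + 1)) j := by
  rw [piVec_apply, (summable_piVec_term c hM hM1 b j).tsum_eq_zero_add, piVec_apply,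
    ← tsum_mul_left]
  simp only [prefixProd_succ]
  congr 1
  · simp [prefixProd]
  · exact tsum_congr fun k => by ring

theorem piVec_sub_of_head_eq (hM : ∀ i, |c i| ≤ M) (hM1 : M < 1) {b b' : ℕ → ι}
    (h : b 0 = b' 0) :
    PiVec c b - PiVec c b' =
      c (b 0) • (PiVec c (fun k => b (k + 1)) - PiVec c (fun k => b' (k + 1))) := by
  ext j
  simp only [PiLp.sub_apply, PiLp.smul_apply, smul_eq_mul,
    piVec_apply_eq_add c hM hM1 b, piVec_apply_eq_add c hM hM1 b', h]
  ring

theorem abs_piVec_apply_sub_apply_le (hM : ∀ i, |c i| ≤ M) (hM1 : M < 1) (b : ℕ → ι)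
    {j j' : ι} (hj : j ≠ j') :
    |PiVec c b j - PiVec c b j'| ≤ (1 - M)⁻¹ := by
  rw [piVec_apply, piVec_apply, ← Summable.tsum_sub (summable_piVec_term c hM hM1 b j)
    (summable_piVec_term c hM hM1 b j')]
  refine tsum_of_norm_bounded (E := ℝ) (hasSum_pow_of_abs_le c hM hM1 (b 0)) fun k => ?_
  rw [← sub_mul, Real.norm_eq_abs, abs_mul]
  refine (mul_le_of_le_one_left (abs_nonneg _) ?_).trans (abs_prefixProd_le c hM b k)
  split_ifs with h₁ h₂ <;> first | exact absurd (h₁.symm.trans h₂) hj | simp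

theorem one_sub_two_mul_div_le_norm_piVec_sub (hM : ∀ i, |c i| ≤ M) (hM1 : M < 1)
    {b b' : ℕ → ι} (h : b 0 ≠ b' 0) :
    (1 - 2 * M) / (1 - M) ≤ ‖PiVec c b - PiVec c b'‖ := by
  set w := fun k => b (k + 1)
  set w' := fun k => b' (k + 1)
  set x := PiVec c b - PiVec c b'
  have hdiff : x (b 0) - x (b' 0) = 2 + c (b 0) * (PiVec c w (b 0) - PiVec c w (b' 0))
      - c (b' 0) * (PiVec c w' (b 0) - PiVec c w' (b' 0)) := by
    simp only [x, PiLp.sub_apply, piVec_apply_eq_add c hM hM1 b, piVec_apply_eq_add c hM hM1 b',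
      if_neg h, if_neg h.symm, ↓reduceIte]
    ring
  have htail (v : ℕ → ι) (i : ι) :
      |c i * (PiVec c v (b 0) - PiVec c v (b' 0))| ≤ M * (1 - M)⁻¹ := by
    rw [abs_mul]
    exact mul_le_mul (hM i) (abs_piVec_apply_sub_apply_le c hM hM1 v h) (abs_nonneg _)
      ((abs_nonneg _).trans (hM i))
  have hx : x (b 0) - x (b' 0) ≤ 2 * ‖x‖ :=
    (le_abs_self _).trans (abs_apply_sub_apply_le_two_mul_norm x (b 0) (b' 0))
  rw [hdiff] at hx
  have hM1' : 0 < 1 - M := sub_pos.mpr hM1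
  calc (1 - 2 * M) / (1 - M) = 1 - M * (1 - M)⁻¹ := by field_simp; ring
    _ ≤ ‖x‖ := by linarith [neg_le_of_abs_le (htail w (b 0)), le_of_abs_le (htail w' (b' 0))]

theorem abs_prefixProd_mul_le_norm_piVec_sub (hM : ∀ i, |c i| ≤ M) (hM1 : M < 1) :
    ∀ (n : ℕ) {b b' : ℕ → ι}, (∀ k < n, b k = b' k) → b n ≠ b' n →
      |prefixProd c b n| * ((1 - 2 * M) / (1 - M)) ≤ ‖PiVec c b - PiVec c b'‖
  | 0, _, _, _, hne => by
    simpa [prefixProd] using one_sub_two_mul_div_le_norm_piVec_sub c hM hM1 hne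
  | n + 1, b, b', hpre, hne => by
    rw [piVec_sub_of_head_eq c hM hM1 (hpre 0 n.succ_pos), norm_smul, Real.norm_eq_abs,
      prefixProd_succ, abs_mul, mul_assoc]
    exact mul_le_mul_of_nonneg_left
      (abs_prefixProd_mul_le_norm_piVec_sub hM hM1 n (fun k hk => hpre (k + 1) (by omega)) hne)
      (abs_nonneg _)

end PiVec

/-- Transversality: for a self-similar IFS `{x ↦ cᵢ x + τᵢ}` with `maxᵢ |cᵢ| < 1/2`
and distinct infinite words `ī ≠ j̄` whose longest common prefix has length `n`,
`‖Π(ī) − Π(j̄)‖ ≥ |c_{ī∧j̄}| (1 − 2 maxᵢ|cᵢ|)/(1 − maxᵢ|cᵢ|) > 0`. -/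
theorem stmt15 {ι : Type} [Fintype ι] [Nonempty ι] [DecidableEq ι]
    (c : ι → ℝ) (h0 : ∀ i, 0 < |c i|) (hc : ∀ i, |c i| < 1 / 2) :
    ∀ (ib jb : ℕ → ι) (n : ℕ), (∀ k < n, ib k = jb k) → ib n ≠ jb n →
      (|∏ l ∈ Finset.range n, c (ib l)| *
          ((1 - 2 * Finset.univ.sup' Finset.univ_nonempty (fun i => |c i|)) /
            (1 - Finset.univ.sup' Finset.univ_nonempty (fun i => |c i|))) ≤
        ‖PiVec c ib - PiVec c jb‖) ∧
      0 < |∏ l ∈ Finset.range n, c (ib l)| *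
          ((1 - 2 * Finset.univ.sup' Finset.univ_nonempty (fun i => |c i|)) /
            (1 - Finset.univ.sup' Finset.univ_nonempty (fun i => |c i|))) := by
  intro ib jb n hpre hne
  set M := univ.sup' univ_nonempty fun i => |c i|
  have hM : ∀ i, |c i| ≤ M := fun i => le_sup' (fun i => |c i|) (mem_univ i)
  have hM2 : M < 1 / 2 := (sup'_lt_iff _).2 fun i _ => hc i
  have hprefix : 0 < |∏ l ∈ range n, c (ib l)| := by
    rw [abs_prod]
    exact prod_pos fun l _ => h0 (ib l)
  refine ⟨abs_prefixProd_mul_le_norm_piVec_sub c hM (by linarith) n hpre hne, ?_⟩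
  exact mul_pos hprefix (div_pos (by linarith) (by linarith))
end
end
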